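/- arXiv:1610.04295 — 2 statements merged into one kernel-verified Lean document; each statement's English description precedes it below -/
import Mathlib

section
/- Let p be an odd prime, k a positive integer, s ≥ 1 an integer, and λ an integer with 0 < λ < p^s. Write λ = p^r·λ' with 0 ≤ r < s, p ∤ λ', and suppose r is odd. Then ρ_{k,λ}(p^s) = (Σ_{i=0}^{(r−1)/2} p^{ki + (s−2i−1)(k−1)}) · (ρ_{k,0}(p) − 1). -/
/-!
Split the solutions modulo `p ^ s` into primitive ones (some coordinate not divisible by `p`) and
the others. As `p` is odd, a primitive solution modulo `p ^ t`, `t ≥ 1`, lifts to exactly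
`p ^ (k - 1)` solutions modulo `p ^ (t + 1)`: writing the lift as `X + p ^ t u`, the condition on
`u` is a linear equation modulo `p` with nonzero coefficient vector `2 X`. When `p ∣ λ` this gives
`p ^ ((s - 1) (k - 1)) (ρ_{k,0}(p) - 1)` primitive solutions. A non-primitive solution is `p y`
with `p ^ 2 ∑ y i ^ 2 = λ`, so it needs `p ^ 2 ∣ λ` and then corresponds, `p ^ k` to one, to a
solution of `∑ y i ^ 2 = λ / p ^ 2` modulo `p ^ (s - 2)`. Removing `p ^ 2` from `λ` `(r - 1) / 2`
times reaches `p ∥ λ`, where only primitive solutions remain.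
-/

/-- `rho k lam n` is the number of `k`-tuples `(x₁,…,x_k) ∈ (ℤ/nℤ)^k` with
`x₁² + ⋯ + x_k² ≡ lam (mod n)`. -/
noncomputable def rho (k : ℕ) (lam : ℤ) (n : ℕ) : ℕ :=
  Nat.card {x : Fin k → ZMod n // ∑ i, x i ^ 2 = (lam : ZMod n)}

open Finset Function Matrix

theorem Nat.card_eq_mul_of_card_fiber {α β : Type*} [Finite α] [Finite β] (f : α → β) {c : ℕ}
    (hc : ∀ b, Nat.card {a // f a = b} = c) : Nat.card α = c * Nat.card β := by
  have : Fintype β := Fintype.ofFinite β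
  rw [← Nat.card_congr (Equiv.sigmaFiberEquiv f), Nat.card_sigma]
  simp [hc, Nat.card_eq_fintype_card, mul_comm]

theorem Nat.card_subtype_eq_mul_of_card_fiber {α β : Type*} [Finite α] [Finite β]
    {P : α → Prop} {Q : β → Prop} (f : α → β) (hf : ∀ a, P a → Q (f a)) {c : ℕ}
    (hc : ∀ b, Q b → Nat.card {a // P a ∧ f a = b} = c) :
    Nat.card {a // P a} = c * Nat.card {b // Q b} :=
  Nat.card_eq_mul_of_card_fiber (fun a : {a // P a} => (⟨f a, hf a a.2⟩ : {b // Q b}))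
    fun b => (Nat.card_congr ((Equiv.subtypeEquivRight fun _ => Subtype.ext_iff).trans
      (Equiv.subtypeSubtypeEquivSubtypeInter P (f · = b)))).trans (hc b b.2)

theorem Nat.card_subtype_eq_card_and_add_card_and_not {α : Type*} [Finite α] (P Q : α → Prop) :
    Nat.card {a // P a} = Nat.card {a // P a ∧ Q a} + Nat.card {a // P a ∧ ¬ Q a} := by
  classical
  rw [← Nat.card_sum]
  exact Nat.card_congr <| (Equiv.sumCompl fun a : {a // P a} => Q a).symm.trans <|
    Equiv.sumCongr (Equiv.subtypeSubtypeEquivSubtypeInter P Q)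
      (Equiv.subtypeSubtypeEquivSubtypeInter P (¬ Q ·))

theorem card_dotProduct_eq {F ι : Type*} [Field F] [Fintype F] [Fintype ι] [DecidableEq ι]
    {c : ι → F} (hc : c ≠ 0) (d : F) :
    Nat.card {t : ι → F // c ⬝ᵥ t = d} = Fintype.card F ^ (Fintype.card ι - 1) := by
  obtain ⟨j, hj⟩ := Function.ne_iff.mp hc
  let f : (ι → F) →+ F := ⟨⟨(c ⬝ᵥ ·), dotProduct_zero c⟩, dotProduct_add c⟩
  have hf : Surjective f := fun b => ⟨Pi.single j (b / c j), by
    simp [f, dotProduct_single, mul_div_cancel₀ _ hj]⟩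
  have hfiber : ∀ b, Nat.card {t // f t = b} = Nat.card {t // c ⬝ᵥ t = d} := fun b => by
    obtain ⟨t₀, ht₀⟩ := hf (d - b)
    refine Nat.card_congr (Equiv.subtypeEquiv (Equiv.addRight t₀) fun t => ?_)
    change f t = b ↔ f (t + t₀) = d
    rw [map_add, ht₀]
    constructor <;> intro h <;> linear_combination h
  have hcard := Nat.card_eq_mul_of_card_fiber f hfiber
  have hι : Fintype.card ι = Fintype.card ι - 1 + 1 :=
    (Nat.sub_add_cancel (Fintype.card_pos_iff.mpr ⟨j⟩)).symm
  rw [Nat.card_fun, Nat.card_eq_fintype_card, Nat.card_eq_fintype_card, hι, pow_succ] at hcard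
  exact (Nat.eq_of_mul_eq_mul_right Fintype.card_pos hcard).symm

namespace ZMod

variable {m n N : ℕ}

/-- Multiplication by `m`, well defined since `m * n = N`; it identifies `ZMod n` with the kernel
of `ZMod N → ZMod m`. -/
def scale (h : m * n = N) : ZMod n →+ ZMod N :=
  lift n ⟨(AddMonoidHom.mulLeft (m : ZMod N)).comp (Int.castAddHom (ZMod N)), by
    simp [← Nat.cast_mul, h]⟩

theorem scale_intCast (h : m * n = N) (c : ℤ) : scale h c = m * c :=
  lift_coe _ _ _

theorem scale_castHom (h : m * n = N) (A : ZMod N) :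
    scale h (castHom (Dvd.intro_left m h) (ZMod n) A) = m * A := by
  obtain ⟨c, rfl⟩ := intCast_surjective A
  rw [map_intCast, scale_intCast]

theorem castHom_scale (h : m * n = N) (a : ZMod n) :
    castHom (Dvd.intro_left m h) (ZMod n) (scale h a) = m * a := by
  obtain ⟨c, rfl⟩ := intCast_surjective a
  rw [scale_intCast, map_mul, map_natCast, map_intCast]

theorem scale_mul (h : m * n = N) (a : ZMod n) (B : ZMod N) :
    scale h a * B = scale h (a * castHom (Dvd.intro_left m h) (ZMod n) B) := by
  obtain ⟨c, rfl⟩ := intCast_surjective a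
  obtain ⟨d, rfl⟩ := intCast_surjective B
  rw [map_intCast (castHom _ (ZMod n)), ← Int.cast_mul, scale_intCast, scale_intCast,
    Int.cast_mul, mul_assoc]

theorem scale_injective (h : m * n = N) (hm : m ≠ 0) : Injective (scale h) := by
  refine (lift_injective n).mpr fun c hc => ?_
  replace hc : ((m * c : ℤ) : ZMod N) = 0 := by simpa using hc
  rw [intCast_zmod_eq_zero_iff_dvd, ← h, Nat.cast_mul] at hc
  exact (intCast_zmod_eq_zero_iff_dvd c n).mpr
    ((mul_dvd_mul_iff_left (Int.natCast_ne_zero.mpr hm)).mp hc)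

theorem castHom_eq_zero_iff_mem_range_scale (h : m * n = N) (A : ZMod N) :
    castHom (Dvd.intro n h) (ZMod m) A = 0 ↔ A ∈ Set.range (scale h) := by
  obtain ⟨c, rfl⟩ := intCast_surjective A
  rw [map_intCast, intCast_zmod_eq_zero_iff_dvd]
  constructor
  · rintro ⟨q, rfl⟩
    exact ⟨q, by rw [scale_intCast, Int.cast_mul, Int.cast_natCast]⟩
  · rintro ⟨a, ha⟩
    obtain ⟨q, rfl⟩ := intCast_surjective a
    rw [scale_intCast, ← Int.cast_natCast, ← Int.cast_mul, intCast_eq_intCast_iff_dvd_sub] at ha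
    exact (dvd_sub_left (dvd_mul_right _ _)).mp
      ((Int.natCast_dvd_natCast.mpr (Dvd.intro n h)).trans ha)

variable {ι : Type*}

noncomputable def castHomFiberEquiv (h : m * n = N) (hm : m ≠ 0) (X : ι → ZMod N) :
    (ι → ZMod n) ≃ {x : ι → ZMod N // ∀ i,
      castHom (Dvd.intro n h) (ZMod m) (x i) = castHom (Dvd.intro n h) (ZMod m) (X i)} :=
  Equiv.ofBijective (fun u => ⟨X + fun i => scale h (u i), fun i => by
      rw [Pi.add_apply, map_add, (castHom_eq_zero_iff_mem_range_scale h _).mpr ⟨u i, rfl⟩,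
        add_zero]⟩) <| by
    refine ⟨fun u v huv => funext fun i => scale_injective h hm ?_, fun x => ?_⟩
    · simpa using congrFun (congrArg Subtype.val huv) i
    · have : ∀ i, ∃ a, scale h a = x.1 i - X i := fun i =>
        (castHom_eq_zero_iff_mem_range_scale h _).mp (by rw [map_sub, x.2 i, sub_self])
      choose u hu using this
      exact ⟨u, Subtype.ext <| funext fun i => by simp [hu]⟩

@[simp]
theorem castHomFiberEquiv_apply (h : m * n = N) (hm : m ≠ 0) (X : ι → ZMod N) (u : ι → ZMod n) :
    (castHomFiberEquiv h hm X u : ι → ZMod N) = X + fun i => scale h (u i) :=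
  rfl

theorem sum_sq_scale [Fintype ι] (h : m * n = N) (y : ι → ZMod n) :
    ∑ i, scale h (y i) ^ 2 = scale h (m * ∑ i, y i ^ 2) := by
  simp only [sq, scale_mul, castHom_scale, map_sum, mul_sum]
  congr! 2 with i
  ring

theorem natCast_mul_eq_natCast_mul_iff (h : m * n = N) (hm : m ≠ 0) (a b : ZMod N) :
    (m : ZMod N) * a = m * b ↔
      castHom (Dvd.intro_left m h) (ZMod n) a = castHom (Dvd.intro_left m h) (ZMod n) b := by
  rw [← scale_castHom h, ← scale_castHom h, (scale_injective h hm).eq_iff]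

theorem card_castHom_fiber [Fintype ι] [NeZero n] (h : m * n = N) (hm : m ≠ 0) (y : ι → ZMod m) :
    Nat.card {x : ι → ZMod N // ∀ i, castHom (Dvd.intro n h) (ZMod m) (x i) = y i} =
      n ^ Fintype.card ι := by
  choose X hX using fun i => castHom_surjective (Dvd.intro n h) (y i)
  simp_rw [← hX]
  rw [← Nat.card_congr (castHomFiberEquiv h hm X), Nat.card_fun, Nat.card_zmod,
    Nat.card_eq_fintype_card]

end ZMod

theorem ZMod.cast_castHom {p M N : ℕ} (hpM : p ∣ M) (hMN : M ∣ N) (x : ZMod N) :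
    ((castHom hMN (ZMod M) x).cast : ZMod p) = x.cast := by
  rw [← ZMod.castHom_apply (h := hpM), ← RingHom.comp_apply, ZMod.castHom_comp,
    ZMod.castHom_apply]

open ZMod

noncomputable def rhoPrim (k : ℕ) (lam : ℤ) (p N : ℕ) : ℕ :=
  Nat.card {x : Fin k → ZMod N // ∑ i, x i ^ 2 = (lam : ZMod N) ∧ ∃ i, ((x i).cast : ZMod p) ≠ 0}

noncomputable def rhoNonprim (k : ℕ) (lam : ℤ) (p N : ℕ) : ℕ :=
  Nat.card {x : Fin k → ZMod N // ∑ i, x i ^ 2 = (lam : ZMod N) ∧ ∀ i, ((x i).cast : ZMod p) = 0}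

variable {k : ℕ}

theorem rho_eq_rhoPrim_add_rhoNonprim {N : ℕ} [NeZero N] (lam : ℤ) (p : ℕ) :
    rho k lam N = rhoPrim k lam p N + rhoNonprim k lam p N := by
  rw [rho, Nat.card_subtype_eq_card_and_add_card_and_not _ fun x => ∃ i, ((x i).cast : ZMod p) ≠ 0]
  simp only [rhoPrim, rhoNonprim, not_exists, ne_eq, not_not]

section Hensel

variable {p : ℕ} [Fact p.Prime] {M N : ℕ} [NeZero M]

/-- Since `p ∣ M`, `(X + M u) ^ 2 = X ^ 2 + M (2 X u)` modulo `M * p`, so the fibre is cut out by a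
linear equation modulo `p` whose coefficients `2 y i` do not all vanish. -/
theorem card_sum_sq_fiber_of_primitive (hp2 : p ≠ 2) (hMN : M * p = N) (hpM : p ∣ M) {lam : ℤ}
    {y : Fin k → ZMod M} (hy : ∑ i, y i ^ 2 = (lam : ZMod M))
    (hprim : ∃ i, ((y i).cast : ZMod p) ≠ 0) :
    Nat.card {x : Fin k → ZMod N // ∑ i, x i ^ 2 = (lam : ZMod N) ∧
      ∀ i, castHom (Dvd.intro p hMN) (ZMod M) (x i) = y i} = p ^ (k - 1) := by
  set π := castHom (Dvd.intro p hMN) (ZMod M)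
  have hpN : ∀ x : ZMod N, castHom (Dvd.intro_left M hMN) (ZMod p) x = (π x).cast :=
    fun x => by rw [castHom_apply, cast_castHom hpM]
  choose X hX using fun i => castHom_surjective (Dvd.intro p hMN) (y i)
  set c : Fin k → ZMod p := fun i => 2 * (y i).cast
  obtain ⟨d, hd⟩ : ∃ d, scale hMN d = lam - ∑ i, X i ^ 2 :=
    (castHom_eq_zero_iff_mem_range_scale hMN _).mp (by
      rw [map_sub, map_intCast, map_sum]
      simp only [map_pow, hX, hy, sub_self])
  have hsq : ∀ u : Fin k → ZMod p,
      ∑ i, (X i + scale hMN (u i)) ^ 2 = ∑ i, X i ^ 2 + scale hMN (c ⬝ᵥ u) := fun u => by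
    have hkill : ∀ i, scale hMN (u i) ^ 2 = 0 := fun i => by
      rw [sq, scale_mul, hpN, (castHom_eq_zero_iff_mem_range_scale hMN _).mpr ⟨u i, rfl⟩,
        cast_zero, mul_zero, map_zero]
    have hcross : ∀ i, 2 * X i * scale hMN (u i) = scale hMN (c i * u i) := fun i => by
      rw [mul_assoc, mul_comm (X i), scale_mul, hpN, hX, two_mul, ← map_add]
      congr 1
      ring
    simp only [dotProduct, map_sum, add_sq, hcross, hkill, add_zero, sum_add_distrib]
  have hc : c ≠ 0 := by
    obtain ⟨j, hj⟩ := hprim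
    exact Function.ne_iff.mpr ⟨j, mul_ne_zero (Ring.two_ne_zero (by rwa [ringChar_zmod_n])) hj⟩
  have hlin := card_dotProduct_eq hc d
  rw [ZMod.card, Fintype.card_fin] at hlin
  rw [← hlin]
  symm
  refine Nat.card_congr <|
    ((Equiv.subtypeEquiv (castHomFiberEquiv hMN (NeZero.ne M) X) fun u => ?_).trans
      (Equiv.subtypeSubtypeEquivSubtypeInter _ fun x => ∑ i, x i ^ 2 = (lam : ZMod N))).trans
      (Equiv.subtypeEquivRight fun x => ?_)
  · rw [castHomFiberEquiv_apply, Pi.add_def, hsq, ← eq_sub_iff_add_eq', ← hd,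
      (scale_injective hMN (NeZero.ne M)).eq_iff]
  · simp only [hX, and_comm, π]

theorem rhoPrim_of_mul_eq (hp2 : p ≠ 2) (hMN : M * p = N) (hpM : p ∣ M) (lam : ℤ) :
    rhoPrim k lam p N = p ^ (k - 1) * rhoPrim k lam p M := by
  have : NeZero N := ⟨by rw [← hMN]; exact mul_ne_zero (NeZero.ne M) (Fact.out : p.Prime).ne_zero⟩
  set π := castHom (Dvd.intro p hMN) (ZMod M)
  refine Nat.card_subtype_eq_mul_of_card_fiber (fun x i => π (x i)) ?_ ?_
  · rintro x ⟨hx, i, hi⟩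
    refine ⟨?_, i, by rwa [cast_castHom hpM]⟩
    simp only [← map_pow, ← map_sum, hx, map_intCast]
  · rintro y ⟨hy, hprim⟩
    rw [← card_sum_sq_fiber_of_primitive hp2 hMN hpM hy hprim]
    refine Nat.card_congr (Equiv.subtypeEquivRight fun x => ?_)
    rw [funext_iff]
    refine ⟨fun ⟨⟨hx, _⟩, hxy⟩ => ⟨hx, hxy⟩, fun ⟨hx, hxy⟩ => ⟨⟨hx, ?_⟩, hxy⟩⟩
    obtain ⟨i, hi⟩ := hprim
    exact ⟨i, by rwa [← cast_castHom hpM (Dvd.intro p hMN), hxy]⟩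

theorem rhoPrim_prime_pow (hp2 : p ≠ 2) (lam : ℤ) (t : ℕ) :
    rhoPrim k lam p (p ^ (t + 1)) = p ^ (t * (k - 1)) * rhoPrim k lam p p := by
  induction t with
  | zero => simp
  | succ t ih =>
    have : NeZero (p ^ (t + 1)) := ⟨pow_ne_zero _ (Fact.out : p.Prime).ne_zero⟩
    rw [rhoPrim_of_mul_eq hp2 (pow_succ p (t + 1)).symm (dvd_pow_self p t.succ_ne_zero), ih,
      ← mul_assoc, ← pow_add]
    ring_nf

end Hensel

theorem rhoPrim_self {p : ℕ} [NeZero p] {lam : ℤ} (hlam : (p : ℤ) ∣ lam) :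
    rhoPrim k lam p p = rho k 0 p - 1 := by
  have h0 : (lam : ZMod p) = 0 := (intCast_zmod_eq_zero_iff_dvd _ _).mpr hlam
  have hsplit := Nat.card_subtype_eq_card_and_add_card_and_not
    (fun x : Fin k → ZMod p => ∑ i, x i ^ 2 = 0) fun x => ∃ i, x i ≠ 0
  have hzero : Nat.card {x : Fin k → ZMod p // ∑ i, x i ^ 2 = 0 ∧ ¬ ∃ i, x i ≠ 0} = 1 :=
    Nat.card_eq_one_iff_exists.mpr ⟨⟨0, by simp⟩, fun x =>
      Subtype.ext <| funext (not_exists_not.mp x.2.2)⟩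
  simp only [rhoPrim, rho, cast_id', id, h0, Int.cast_zero]
  omega

section Nonprimitive

variable {m n N : ℕ}

theorem rhoNonprim_mul_eq_card (h : m * n = N) (hm : m ≠ 0) (lam' : ℤ) :
    rhoNonprim k (m * lam') m N =
      Nat.card {y : Fin k → ZMod n // (m : ZMod n) * ∑ i, y i ^ 2 = lam'} := by
  rw [rhoNonprim]
  symm
  refine Nat.card_congr <| ((Equiv.subtypeEquiv (castHomFiberEquiv h hm 0) fun y => ?_).trans
    (Equiv.subtypeSubtypeEquivSubtypeInter _
      fun x => ∑ i, x i ^ 2 = ((m * lam' : ℤ) : ZMod N))).trans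
    (Equiv.subtypeEquivRight fun x => ?_)
  · simp only [castHomFiberEquiv_apply, zero_add]
    rw [sum_sq_scale h, Int.cast_mul, Int.cast_natCast, ← scale_intCast h,
      (scale_injective h hm).eq_iff]
  · simp only [Pi.zero_apply, map_zero, castHom_apply, and_comm]

theorem rhoNonprim_eq_zero (h : m * n = N) (hm : m ≠ 0) (hmn : m ∣ n) {lam' : ℤ}
    (hlam' : ¬ (m : ℤ) ∣ lam') : rhoNonprim k (m * lam') m N = 0 := by
  rw [rhoNonprim_mul_eq_card h hm, Nat.card_eq_zero]
  refine Or.inl ⟨fun ⟨y, hy⟩ => hlam' ?_⟩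
  have := congrArg (castHom hmn (ZMod m)) hy
  rwa [map_mul, map_natCast, natCast_self, zero_mul, map_intCast, eq_comm,
    intCast_zmod_eq_zero_iff_dvd] at this

theorem rhoNonprim_eq {n₂ : ℕ} [NeZero n₂] (h₁ : m * n = N) (h₂ : m * n₂ = n) (hm : m ≠ 0)
    (μ : ℤ) : rhoNonprim k (m * (m * μ)) m N = m ^ k * rho k μ n₂ := by
  have : NeZero m := ⟨hm⟩
  have : NeZero n := ⟨by rw [← h₂]; exact mul_ne_zero hm (NeZero.ne n₂)⟩
  set π := castHom (Dvd.intro_left m h₂) (ZMod n₂)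
  have hcond : ∀ y : Fin k → ZMod n, (m : ZMod n) * ∑ i, y i ^ 2 = ((m * μ : ℤ) : ZMod n) ↔
      ∑ i, π (y i) ^ 2 = μ := fun y => by
    rw [Int.cast_mul, Int.cast_natCast, natCast_mul_eq_natCast_mul_iff h₂ hm, map_sum, map_intCast]
    simp only [map_pow, π]
  rw [rhoNonprim_mul_eq_card h₁ hm, rho]
  simp only [hcond]
  refine Nat.card_subtype_eq_mul_of_card_fiber (α := Fin k → ZMod n) (β := Fin k → ZMod n₂)
    (Q := fun x => ∑ i, x i ^ 2 = (μ : ZMod n₂)) (fun y i => π (y i)) (fun _ hy => hy)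
    fun b hb => ?_
  have hfiber := card_castHom_fiber ((mul_comm n₂ m).trans h₂) (NeZero.ne n₂) b
  rw [Fintype.card_fin] at hfiber
  rw [← hfiber]
  refine Nat.card_congr (Equiv.subtypeEquivRight fun y => ?_)
  rw [funext_iff]
  exact ⟨And.right, fun hyb => ⟨by simp only [π, hyb, hb], hyb⟩⟩

end Nonprimitive

section PrimePower

variable {p : ℕ} [Fact p.Prime]

theorem rho_prime_pow_of_dvd (hp2 : p ≠ 2) {s : ℕ} (hs : 1 ≤ s) {lam : ℤ} (hlam : (p : ℤ) ∣ lam) :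
    rho k lam (p ^ s) = p ^ ((s - 1) * (k - 1)) * (rho k 0 p - 1) + rhoNonprim k lam p (p ^ s) := by
  obtain ⟨t, rfl⟩ := Nat.exists_eq_add_of_le' hs
  have : NeZero (p ^ (t + 1)) := ⟨pow_ne_zero _ (Fact.out : p.Prime).ne_zero⟩
  rw [rho_eq_rhoPrim_add_rhoNonprim lam p, rhoPrim_prime_pow hp2, rhoPrim_self hlam,
    Nat.add_sub_cancel]

theorem rho_prime_pow_mul_odd_pow (hp2 : p ≠ 2) (j : ℕ) {s : ℕ} (hs : 2 * j + 1 < s) {lam' : ℤ}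
    (hlam' : ¬ (p : ℤ) ∣ lam') :
    rho k ((p : ℤ) ^ (2 * j + 1) * lam') (p ^ s) =
      (∑ i ∈ range (j + 1), p ^ (k * i + (s - 2 * i - 1) * (k - 1))) * (rho k 0 p - 1) := by
  have hp0 : p ≠ 0 := (Fact.out : p.Prime).ne_zero
  have : ∀ t, NeZero (p ^ t) := fun t => ⟨pow_ne_zero t hp0⟩
  have hps : ∀ {s}, 2 ≤ s → p * (p * p ^ (s - 2)) = p ^ s := fun hs => by
    rw [← pow_succ', ← pow_succ', Nat.sub_add_cancel hs]
  induction j generalizing s with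
  | zero =>
    rw [mul_zero, zero_add, pow_one, rho_prime_pow_of_dvd hp2 (by omega) (dvd_mul_right _ _),
      rhoNonprim_eq_zero (hps (by omega)) hp0 (dvd_mul_right _ _) hlam']
    simp
  | succ j ih =>
    have hlam : (p : ℤ) ^ (2 * (j + 1) + 1) * lam' = p * (p * (p ^ (2 * j + 1) * lam')) := by ring
    rw [hlam, rho_prime_pow_of_dvd hp2 (by omega) (dvd_mul_right _ _),
      rhoNonprim_eq (hps (by omega)) rfl hp0, ih (by omega),
      sum_range_succ' (fun i => p ^ (k * i + (s - 2 * i - 1) * (k - 1)))]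
    have hterm : ∀ i ∈ range (j + 1), p ^ (k * (i + 1) + (s - 2 * (i + 1) - 1) * (k - 1)) =
        p ^ k * p ^ (k * i + (s - 2 - 2 * i - 1) * (k - 1)) := fun i _ => by
      rw [← pow_add, show s - 2 * (i + 1) - 1 = s - 2 - 2 * i - 1 by omega]
      ring_nf
    rw [sum_congr rfl hterm, ← mul_sum, mul_zero, Nat.sub_zero, zero_add]
    ring

end PrimePower

theorem rho_odd_prime_pow_r_odd_general (p : ℕ) (hp : p.Prime) (hodd : Odd p) (k : ℕ)
    (s : ℕ) (lam : ℤ)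
    (r : ℕ) (lam' : ℤ) (hr : r < s) (hfac : lam = (p : ℤ) ^ r * lam')
    (hnd : ¬ (p : ℤ) ∣ lam') (hrodd : Odd r) :
    rho k lam (p ^ s) =
      (∑ i ∈ Finset.range ((r - 1) / 2 + 1), p ^ (k * i + (s - 2 * i - 1) * (k - 1))) *
        (rho k 0 p - 1) := by
  have : Fact p.Prime := ⟨hp⟩
  obtain ⟨j, rfl⟩ := hrodd
  rw [hfac, show (2 * j + 1 - 1) / 2 = j by omega]
  exact rho_prime_pow_mul_odd_pow (by rintro rfl; exact absurd hodd (by decide)) j hr hnd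

/-- For an odd prime `p` and `λ = p^r·λ'` with `p ∤ λ'` and `r` odd,
`ρ_{k,λ}(p^s) = (Σ_{i=0}^{(r−1)/2} p^{ki+(s−2i−1)(k−1)}) · (ρ_{k,0}(p) − 1)`. -/
theorem rho_odd_prime_pow_r_odd (p : ℕ) (hp : p.Prime) (hodd : Odd p) (k : ℕ) (hk : 0 < k)
    (s : ℕ) (hs : 1 ≤ s) (lam : ℤ) (hlam0 : 0 < lam) (hlam1 : lam < (p : ℤ) ^ s)
    (r : ℕ) (lam' : ℤ) (hr : r < s) (hfac : lam = (p : ℤ) ^ r * lam')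
    (hnd : ¬ (p : ℤ) ∣ lam') (hrodd : Odd r) :
    rho k lam (p ^ s) =
      (∑ i ∈ Finset.range ((r - 1) / 2 + 1), p ^ (k * i + (s - 2 * i - 1) * (k - 1))) *
        (rho k 0 p - 1) :=
  rho_odd_prime_pow_r_odd_general p hp hodd k s lam r lam' hr hfac hnd hrodd
end

section
/- Let p be an odd prime, k a positive integer, and s ≥ 1 an integer. Then ρ_{k,0}(p^s) = (Σ_{i=0}^{⌊(s−1)/2⌋} p^{ki + (s−2i−1)(k−1)}) · (ρ_{k,0}(p) − 1) + p^{k·⌊s/2⌋}. -/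
/-!
Split the solutions of `x₁² + ⋯ + x_k² = 0` modulo `p ^ r` into primitive ones (some coordinate
prime to `p`) and imprimitive ones. Modulo `p` the only imprimitive solution is `0`; modulo
`p ^ (r + 2)` the imprimitive solutions are `p y` with `y` any lift to `p ^ (r + 1)` of a
solution modulo `p ^ r`, so there are `p ^ k ρ(p ^ r)` of them. By Hensel's lemma, a primitive
solution `x` modulo `p ^ s`, `s ≥ 1`, lifts to exactly `p ^ (k - 1)` solutions modulo `p ^ (s + 1)`:
the lift `x + p ^ s t` is a solution iff `t` satisfies the linear equation `2 x ⬝ t = -a` over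
`𝔽_p`, where `∑ xᵢ² = p ^ s a`, and `2 x ≢ 0` because `p` is odd. The resulting two-step
recurrence for `ρ(p ^ r)` solves to the stated formula.
-/

open Finset

theorem card_filter_comp_eq_mul {α β : Type*} [Fintype α] [Fintype β] [DecidableEq β]
    {f : α → β} {c : ℕ} (hf : ∀ b, #{a | f a = b} = c) (P : β → Prop) [DecidablePred P] :
    #{a | P (f a)} = c * #{b | P b} := by
  rw [card_eq_sum_card_fiberwise (f := f) (t := {b | P b}) (fun a ha => by simpa using ha),
    sum_const_nat fun b hb => ?_, mul_comm]
  rw [← hf b, filter_filter]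
  congr 1 with a
  simp only [mem_filter, mem_univ, true_and, and_iff_right_iff_imp] at hb ⊢
  rintro rfl
  exact hb

theorem AddMonoidHom.card_filter_comp_mul_card {G H : Type*} [AddGroup G] [Fintype G]
    [AddMonoid H] [Fintype H] [DecidableEq H] (f : G →+ H) (hf : Function.Surjective f)
    (P : H → Prop) [DecidablePred P] :
    #{g | P (f g)} * Fintype.card H = Fintype.card G * #{h | P h} := by
  have hfiber (h : H) : #{g | f g = h} = #{g | f g = 0} :=
    AddMonoidHom.card_fiber_eq_of_mem_range f (hf h) (hf 0)
  have hG : Fintype.card G = #{g | f g = 0} * Fintype.card H := by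
    simpa using card_filter_comp_eq_mul hfiber fun _ => True
  rw [card_filter_comp_eq_mul hfiber P, hG]
  ring

theorem card_filter_dotProduct_eq {F ι : Type*} [Field F] [Fintype F] [DecidableEq F] [Fintype ι]
    [DecidableEq ι] {a : ι → F} (ha : a ≠ 0) (b : F) :
    #{t : ι → F | a ⬝ᵥ t = b} = Fintype.card F ^ (Fintype.card ι - 1) := by
  obtain ⟨j, hj⟩ := Function.ne_iff.mp ha
  let f : (ι → F) →+ F := AddMonoidHom.mk' (a ⬝ᵥ ·) (dotProduct_add a)
  have hf : Function.Surjective f := fun c =>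
    ⟨Pi.single j (c / a j), by simp [f, dotProduct_single, mul_div_cancel₀ _ hj]⟩
  have h := f.card_filter_comp_mul_card hf (· = b)
  have hι : Fintype.card ι = Fintype.card ι - 1 + 1 :=
    (Nat.sub_add_cancel (Fintype.card_pos_iff.mpr ⟨j⟩)).symm
  rw [filter_eq', if_pos (mem_univ b), card_singleton, mul_one, Fintype.card_fun, hι,
    pow_succ] at h
  exact Nat.eq_of_mul_eq_mul_right Fintype.card_pos h

theorem card_filter_castHom_comp {ι : Type*} [Fintype ι] [DecidableEq ι] {m n : ℕ} [NeZero m]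
    [NeZero n] (h : m ∣ n) (P : (ι → ZMod m) → Prop) [DecidablePred P] :
    #{z : ι → ZMod n | P (ZMod.castHom h (ZMod m) ∘ z)} * m ^ Fintype.card ι
      = n ^ Fintype.card ι * #{w | P w} := by
  have := ((ZMod.castHom h (ZMod m)).toAddMonoidHom.compLeft ι).card_filter_comp_mul_card
    (ZMod.castHom_surjective h).comp_left P
  rwa [Fintype.card_fun, Fintype.card_fun, ZMod.card, ZMod.card] at this

theorem sum_sq_natCast_eq_zero_iff {ι : Type*} [Fintype ι] (n : ℕ) (v : ι → ℕ) :
    ∑ i, (v i : ZMod n) ^ 2 = 0 ↔ n ∣ ∑ i, v i ^ 2 := by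
  rw [← ZMod.natCast_eq_zero_iff]
  push_cast
  rfl

theorem sum_sq_eq_zero_iff_dvd {ι : Type*} [Fintype ι] {n : ℕ} [NeZero n] (x : ι → ZMod n) :
    ∑ i, x i ^ 2 = 0 ↔ n ∣ ∑ i, (x i).val ^ 2 := by
  simpa only [ZMod.natCast_zmod_val] using sum_sq_natCast_eq_zero_iff n fun i => (x i).val

theorem rho_zero_eq_card (k n : ℕ) [NeZero n] :
    rho k 0 n = #{x : Fin k → ZMod n | ∑ i, x i ^ 2 = 0} := by
  rw [rho, Nat.card_eq_fintype_card, Fintype.card_subtype, Int.cast_zero]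

theorem rho_zero_one (k : ℕ) : rho k 0 1 = 1 := by
  rw [rho_zero_eq_card, filter_true_of_mem fun x _ => Subsingleton.elim _ _, card_univ,
    Fintype.card_unique]

section PrimitiveSolutions

variable (p k n : ℕ) [NeZero n]

def primitiveZeros : Finset (Fin k → ZMod n) := {x | ∑ i, x i ^ 2 = 0 ∧ ∃ i, ¬ p ∣ (x i).val}

def imprimitiveZeros : Finset (Fin k → ZMod n) := {x | ∑ i, x i ^ 2 = 0 ∧ ∀ i, p ∣ (x i).val}

theorem rho_zero_eq_card_primitiveZeros_add :
    rho k 0 n = #(primitiveZeros p k n) + #(imprimitiveZeros p k n) := by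
  rw [rho_zero_eq_card, ← card_filter_add_card_filter_not fun x : Fin k → ZMod n =>
    ∃ i, ¬ p ∣ (x i).val, filter_filter, filter_filter]
  simp only [not_exists, not_not]
  rfl

end PrimitiveSolutions

theorem card_imprimitiveZeros_of_le (p k : ℕ) {n : ℕ} [NeZero n] (hn : n ≤ p) :
    #(imprimitiveZeros p k n) = 1 := by
  rw [imprimitiveZeros, card_eq_one]
  refine ⟨0, eq_singleton_iff_unique_mem.mpr ⟨by simp, fun x hx => funext fun i => ?_⟩⟩
  simp only [mem_filter, mem_univ, true_and] at hx
  exact (ZMod.val_eq_zero _).mp (Nat.eq_zero_of_dvd_of_lt (hx.2 i) ((ZMod.val_lt _).trans_le hn))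

theorem pow_add_two_dvd_sum_sq_mul_iff {ι : Type*} [Fintype ι] {p : ℕ} (hp : 0 < p) (r : ℕ)
    (u : ι → ℕ) : p ^ (r + 2) ∣ ∑ i, (p * u i) ^ 2 ↔ p ^ r ∣ ∑ i, u i ^ 2 := by
  simp_rw [mul_pow, ← mul_sum, pow_add p r 2, mul_comm (p ^ r)]
  exact Nat.mul_dvd_mul_iff_left (by positivity)

theorem card_imprimitiveZeros_pow_add_two (p k r : ℕ) [NeZero p] :
    #(imprimitiveZeros p k (p ^ (r + 2))) = p ^ k * rho k 0 (p ^ r) := by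
  have hp : 0 < p := Nat.pos_of_neZero p
  have hval_mul (u : ZMod (p ^ (r + 1))) :
      ((p * u.val : ℕ) : ZMod (p ^ (r + 2))).val = p * u.val :=
    ZMod.val_natCast_of_lt (pow_succ' p (r + 1) ▸ Nat.mul_lt_mul_of_pos_left u.val_lt hp)
  have hval_div (x : ZMod (p ^ (r + 2))) :
      ((x.val / p : ℕ) : ZMod (p ^ (r + 1))).val = x.val / p :=
    ZMod.val_natCast_of_lt (Nat.div_lt_of_lt_mul (by rw [← pow_succ']; exact x.val_lt))
  have hlift : #{z : Fin k → ZMod (p ^ (r + 1)) | p ^ r ∣ ∑ i, (z i).val ^ 2}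
      = p ^ k * rho k 0 (p ^ r) := by
    have h := card_filter_castHom_comp (ι := Fin k) (pow_dvd_pow p (Nat.le_add_right r 1))
      fun w => ∑ i, w i ^ 2 = 0
    simp only [Function.comp_apply, ZMod.castHom_apply, ZMod.cast_eq_val,
      sum_sq_natCast_eq_zero_iff, Fintype.card_fin] at h
    rw [rho_zero_eq_card]
    refine Nat.eq_of_mul_eq_mul_right (by positivity : 0 < (p ^ r) ^ k) ?_
    rw [h, ← pow_mul, ← pow_mul, add_mul, one_mul, pow_add]
    ring
  rw [imprimitiveZeros, ← hlift]
  refine card_nbij' (fun x i => ((x i).val / p : ℕ)) (fun z i => (p * (z i).val : ℕ))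
    (fun x hx => ?_) (fun z hz => ?_) (fun x hx => ?_) (fun z _ => ?_)
  · simp only [coe_filter, mem_univ, true_and, Set.mem_ofPred] at hx ⊢
    rw [sum_sq_eq_zero_iff_dvd] at hx
    simp only [hval_div]
    rw [← pow_add_two_dvd_sum_sq_mul_iff hp]
    simpa only [Nat.mul_div_cancel' (hx.2 _)] using hx.1
  · simp only [coe_filter, mem_univ, true_and, Set.mem_ofPred] at hz ⊢
    simp_rw [sum_sq_natCast_eq_zero_iff, pow_add_two_dvd_sum_sq_mul_iff hp, hval_mul]
    exact ⟨hz, fun i => dvd_mul_right p _⟩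
  · simp only [coe_filter, mem_univ, true_and, Set.mem_ofPred] at hx
    ext i
    dsimp only
    rw [hval_div, Nat.mul_div_cancel' (hx.2 i), ZMod.natCast_zmod_val]
  · ext i
    dsimp only
    rw [hval_mul, Nat.mul_div_cancel_left _ hp, ZMod.natCast_zmod_val]

theorem pow_succ_dvd_sum_sq_add_pow_mul_iff {ι : Type*} [Fintype ι] {p s : ℕ} (hp : 0 < p)
    (hs : s ≠ 0) {v : ι → ℕ} {a : ℕ} (ha : ∑ i, v i ^ 2 = p ^ s * a) (u : ι → ℕ) :
    p ^ (s + 1) ∣ ∑ i, (v i + p ^ s * u i) ^ 2 ↔ p ∣ a + 2 * ∑ i, v i * u i := by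
  have hexpand : ∑ i, (v i + p ^ s * u i) ^ 2
      = p ^ s * (a + 2 * ∑ i, v i * u i + p ^ s * ∑ i, u i ^ 2) := by
    simp only [add_sq, sum_add_distrib, ha, mul_add, mul_sum]
    congr 1
    · congr 1
      exact sum_congr rfl fun i _ => by ring
    · exact sum_congr rfl fun i _ => by ring
  rw [hexpand, pow_succ, Nat.mul_dvd_mul_iff_left (by positivity),
    Nat.dvd_add_left (dvd_mul_of_dvd_left (dvd_pow_self p hs) _)]

theorem sum_sq_natCast_add_pow_mul_eq_zero_iff {ι : Type*} [Fintype ι] {p s : ℕ} [NeZero p]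
    (hs : s ≠ 0) {v : ι → ℕ} {a : ℕ} (ha : ∑ i, v i ^ 2 = p ^ s * a) (t : ι → ZMod p) :
    ∑ i, ((v i + p ^ s * (t i).val : ℕ) : ZMod (p ^ (s + 1))) ^ 2 = 0
      ↔ (fun i => 2 * (v i : ZMod p)) ⬝ᵥ t = -a := by
  rw [sum_sq_natCast_eq_zero_iff,
    pow_succ_dvd_sum_sq_add_pow_mul_iff (Nat.pos_of_neZero p) hs ha, ← ZMod.natCast_eq_zero_iff,
    eq_neg_iff_add_eq_zero, add_comm, dotProduct]
  push_cast
  simp only [ZMod.natCast_zmod_val, mul_sum, mul_assoc]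

abbrev powSuccCastHom (p s : ℕ) : ZMod (p ^ (s + 1)) →+* ZMod (p ^ s) :=
  ZMod.castHom (pow_dvd_pow p (Nat.le_add_right s 1)) _

theorem val_powSuccCastHom {p s : ℕ} [NeZero p] (y : ZMod (p ^ (s + 1))) :
    (powSuccCastHom p s y).val = y.val % p ^ s := by
  rw [ZMod.castHom_apply, ZMod.cast_eq_val, ZMod.val_natCast]

theorem dvd_val_powSuccCastHom_iff {p s : ℕ} [NeZero p] (hs : s ≠ 0) (y : ZMod (p ^ (s + 1))) :
    p ∣ (powSuccCastHom p s y).val ↔ p ∣ y.val := by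
  rw [val_powSuccCastHom, Nat.dvd_mod_iff (dvd_pow_self p hs)]

theorem card_lifts_of_sum_sq_eq_zero {p s k : ℕ} [Fact p.Prime] (hp2 : p ≠ 2) (hs : s ≠ 0)
    {x : Fin k → ZMod (p ^ s)} (hx : ∑ i, x i ^ 2 = 0) {j : Fin k} (hj : ¬ p ∣ (x j).val) :
    #{y : Fin k → ZMod (p ^ (s + 1)) | ∑ i, y i ^ 2 = 0 ∧ powSuccCastHom p s ∘ y = x}
      = p ^ (k - 1) := by
  have hp : 0 < p := (Fact.out : p.Prime).pos
  obtain ⟨a, ha⟩ := (sum_sq_eq_zero_iff_dvd x).mp hx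
  set c : Fin k → ZMod p := fun i => 2 * ((x i).val : ZMod p)
  have hc : c ≠ 0 := Function.ne_iff.mpr ⟨j, mul_ne_zero
    (Ring.two_ne_zero (by rwa [ZMod.ringChar_zmod_n])) (by rwa [Ne, ZMod.natCast_eq_zero_iff])⟩
  have hsol := card_filter_dotProduct_eq hc (-a)
  rw [ZMod.card, Fintype.card_fin] at hsol
  rw [← hsol]
  have hval_lift (i : Fin k) (t : ZMod p) :
      (((x i).val + p ^ s * t.val : ℕ) : ZMod (p ^ (s + 1))).val = (x i).val + p ^ s * t.val :=
    ZMod.val_natCast_of_lt (pow_succ p s ▸ Nat.add_mul_lt_mul_of_lt_of_lt (x i).val_lt t.val_lt)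
  have hval_digit (y : ZMod (p ^ (s + 1))) : ((y.val / p ^ s : ℕ) : ZMod p).val = y.val / p ^ s :=
    ZMod.val_natCast_of_lt (Nat.div_lt_of_lt_mul (pow_succ p s ▸ y.val_lt))
  have hdigits {y : Fin k → ZMod (p ^ (s + 1))} (hy : powSuccCastHom p s ∘ y = x) (i : Fin k) :
      (((x i).val + p ^ s * (((y i).val / p ^ s : ℕ) : ZMod p).val : ℕ) : ZMod (p ^ (s + 1)))
        = y i := by
    have hmod := congrArg ZMod.val (congrFun hy i)
    rw [Function.comp_apply, val_powSuccCastHom] at hmod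
    rw [hval_digit, ← hmod, Nat.mod_add_div, ZMod.natCast_zmod_val]
  refine card_nbij' (fun y i => ((y i).val / p ^ s : ℕ))
    (fun t i => ((x i).val + p ^ s * (t i).val : ℕ)) (fun y hy => ?_) (fun t ht => ?_)
    (fun y hy => ?_) (fun t _ => ?_)
  · simp only [coe_filter, mem_univ, true_and, Set.mem_ofPred] at hy ⊢
    rw [← sum_sq_natCast_add_pow_mul_eq_zero_iff hs ha]
    simpa only [hdigits hy.2] using hy.1
  · simp only [coe_filter, mem_univ, true_and, Set.mem_ofPred] at ht ⊢
    refine ⟨(sum_sq_natCast_add_pow_mul_eq_zero_iff hs ha t).mpr ht, ?_⟩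
    ext i
    rw [Function.comp_apply, map_natCast, Nat.cast_add, Nat.cast_mul, ZMod.natCast_self,
      zero_mul, add_zero, ZMod.natCast_zmod_val]
  · simp only [coe_filter, mem_univ, true_and, Set.mem_ofPred] at hy
    exact funext (hdigits hy.2)
  · ext i
    dsimp only
    rw [hval_lift, Nat.add_mul_div_left _ _ (by positivity), Nat.div_eq_of_lt (x i).val_lt,
      zero_add, ZMod.natCast_zmod_val]

theorem card_primitiveZeros_pow_succ {p s : ℕ} (k : ℕ) [Fact p.Prime] (hp2 : p ≠ 2) (hs : s ≠ 0) :
    #(primitiveZeros p k (p ^ (s + 1))) = p ^ (k - 1) * #(primitiveZeros p k (p ^ s)) := by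
  have hprimitive (y : Fin k → ZMod (p ^ (s + 1))) :
      (∃ i, ¬ p ∣ (powSuccCastHom p s (y i)).val) ↔ ∃ i, ¬ p ∣ (y i).val := by
    simp only [dvd_val_powSuccCastHom_iff hs]
  have hmaps : ∀ y ∈ primitiveZeros p k (p ^ (s + 1)),
      powSuccCastHom p s ∘ y ∈ primitiveZeros p k (p ^ s) := by
    intro y hy
    simp only [primitiveZeros, mem_filter, mem_univ, true_and, Function.comp_apply] at hy ⊢
    simp only [← map_pow, ← map_sum, hy.1, map_zero, hprimitive, hy.2, and_self]
  have hfiber : ∀ x ∈ primitiveZeros p k (p ^ s),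
      #{y ∈ primitiveZeros p k (p ^ (s + 1)) | powSuccCastHom p s ∘ y = x} = p ^ (k - 1) := by
    intro x hx
    simp only [primitiveZeros, mem_filter, mem_univ, true_and] at hx
    obtain ⟨hx, j, hj⟩ := hx
    rw [primitiveZeros, filter_filter, ← card_lifts_of_sum_sq_eq_zero hp2 hs hx hj]
    congr 1 with y
    simp only [mem_filter, mem_univ, true_and]
    constructor
    · exact fun h => ⟨h.1.1, h.2⟩
    · rintro ⟨hy, hyx⟩
      refine ⟨⟨hy, (hprimitive y).mp ⟨j, ?_⟩⟩, hyx⟩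
      rwa [← hyx] at hj
  rw [card_eq_sum_card_fiberwise hmaps, sum_const_nat hfiber, mul_comm]

theorem card_primitiveZeros_pow_succ_eq_mul {p : ℕ} (k : ℕ) [Fact p.Prime] (hp2 : p ≠ 2)
    (r : ℕ) :
    #(primitiveZeros p k (p ^ (r + 1))) = p ^ (r * (k - 1)) * #(primitiveZeros p k (p ^ 1)) := by
  induction r with
  | zero => rw [zero_mul, pow_zero, one_mul]
  | succ r ih =>
    rw [card_primitiveZeros_pow_succ k hp2 r.succ_ne_zero, ih, ← mul_assoc, ← pow_add]
    ring_nf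

theorem sum_range_half_add_two (p k t : ℕ) :
    ∑ i ∈ range ((t + 2) / 2 + 1), p ^ (k * i + (t + 2 - 2 * i) * (k - 1))
      = p ^ ((t + 2) * (k - 1))
        + p ^ k * ∑ i ∈ range (t / 2 + 1), p ^ (k * i + (t - 2 * i) * (k - 1)) := by
  rw [Nat.add_div_right t two_pos, sum_range_succ', Finset.mul_sum, add_comm]
  congr 1
  · simp
  · refine sum_congr rfl fun i _ => ?_
    rw [← pow_add, show t + 2 - 2 * (i + 1) = t - 2 * i by omega]
    ring_nf

theorem closed_form_of_two_step_recurrence {p k : ℕ} {N P : ℕ → ℕ} (h0 : N 0 = 1)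
    (h1 : N 1 = P 1 + 1) (hN : ∀ r, N (r + 2) = P (r + 2) + p ^ k * N r)
    (hP : ∀ r, P (r + 1) = p ^ (r * (k - 1)) * P 1) :
    ∀ t, N (t + 1) = (∑ i ∈ range (t / 2 + 1), p ^ (k * i + (t - 2 * i) * (k - 1))) * P 1
      + p ^ (k * ((t + 1) / 2))
  | 0 => by simp [h1]
  | 1 => by simp [hN 0, hP 1, h0]
  | t + 2 => by
    rw [hN (t + 1), hP, closed_form_of_two_step_recurrence h0 h1 hN hP t, sum_range_half_add_two,
      show (t + 2 + 1) / 2 = (t + 1) / 2 + 1 by omega]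
    ring

theorem rho_zero_odd_prime_pow_general (p : ℕ) (hp : p.Prime) (hodd : Odd p) (k : ℕ)
    (s : ℕ) (hs : 1 ≤ s) :
    rho k 0 (p ^ s) =
      (∑ i ∈ Finset.range ((s - 1) / 2 + 1), p ^ (k * i + (s - 2 * i - 1) * (k - 1))) *
        (rho k 0 p - 1)
      + p ^ (k * (s / 2)) := by
  have := Fact.mk hp
  have hp2 : p ≠ 2 := by
    rintro rfl
    exact absurd hodd (by decide)
  have h1 : rho k 0 (p ^ 1) = #(primitiveZeros p k (p ^ 1)) + 1 := by
    rw [rho_zero_eq_card_primitiveZeros_add p, card_imprimitiveZeros_of_le p k (pow_one p).le]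
  have hclosed := closed_form_of_two_step_recurrence (p := p) (k := k)
    (N := fun r => rho k 0 (p ^ r)) (P := fun r => #(primitiveZeros p k (p ^ r)))
    (by simp [rho_zero_one]) h1
    (fun r => by rw [rho_zero_eq_card_primitiveZeros_add p, card_imprimitiveZeros_pow_add_two])
    (card_primitiveZeros_pow_succ_eq_mul k hp2)
  have hrho_p : rho k 0 p = #(primitiveZeros p k (p ^ 1)) + 1 := by
    simpa only [pow_one] using h1
  obtain ⟨t, rfl⟩ : ∃ t, s = t + 1 := ⟨s - 1, by omega⟩
  rw [hclosed t, hrho_p, Nat.add_sub_cancel, Nat.add_sub_cancel]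
  congr 2
  exact sum_congr rfl fun i _ => by rw [show t + 1 - 2 * i - 1 = t - 2 * i by omega]

/-- For an odd prime `p`,
`ρ_{k,0}(p^s) = (Σ_{i=0}^{⌊(s−1)/2⌋} p^{ki+(s−2i−1)(k−1)}) · (ρ_{k,0}(p) − 1) + p^{k⌊s/2⌋}`. -/
theorem rho_zero_odd_prime_pow (p : ℕ) (hp : p.Prime) (hodd : Odd p) (k : ℕ) (hk : 0 < k)
    (s : ℕ) (hs : 1 ≤ s) :
    rho k 0 (p ^ s) =
      (∑ i ∈ Finset.range ((s - 1) / 2 + 1), p ^ (k * i + (s - 2 * i - 1) * (k - 1))) *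
        (rho k 0 p - 1)
      + p ^ (k * (s / 2)) :=
  rho_zero_odd_prime_pow_general p hp hodd k s hs
end
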